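/- arXiv:2108.09805 — 2 statements merged into one kernel-verified Lean document; each statement's English description precedes it below -/
import Mathlib

section
/- Let N(μ*, Σ) and N(μ, Σ) be d-dimensional Gaussians with the same covariance Σ, with σ² := Σ_{ii} and μ*_i = 1 for a fixed coordinate i. If μ_i > 1, then P_{x∼N(μ*,Σ)}[−1 ≤ x_i ≤ 1] − P_{x∼N(μ,Σ)}[−1 ≤ x_i ≤ 1] ≥ P_{t∼N(1,σ²)}[−1 ≤ t ≤ 1] · (1 − exp(−(μ_i−1)²/(2σ²))). -/
open MeasureTheory ProbabilityTheory

/-! Shifting the mean of a Gaussian from `a` to `m ≥ a` multiplies its density at every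
`x ≤ a` by `exp(-((x-m)² - (x-a)²)/(2v)) ≤ exp(-(m-a)²/(2v))`, the ratio being largest at
`x = a`. Integrating over `[-1, 1] ⊆ (-∞, 1]` with `a = 1` gives
`P_m[-1,1] ≤ exp(-(m-1)²/(2v)) · P_1[-1,1]`, which rearranges to the claim. -/

namespace ProbabilityTheory

lemma gaussianPDFReal_le_exp_mul_gaussianPDFReal (v : NNReal) {a m x : ℝ} (ham : a ≤ m)
    (hxa : x ≤ a) :
    gaussianPDFReal m v x ≤ Real.exp (-(m - a) ^ 2 / (2 * (v : ℝ))) * gaussianPDFReal a v x := by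
  rcases eq_zero_or_pos v with rfl | hv
  · simp
  have hv' : (0 : ℝ) < v := hv
  have hsq : (m - a) ^ 2 + (x - a) ^ 2 ≤ (x - m) ^ 2 := by
    nlinarith [mul_nonneg (sub_nonneg.2 ham) (sub_nonneg.2 hxa)]
  simp only [gaussianPDFReal, mul_left_comm (Real.exp _), ← Real.exp_add]
  gcongr
  rw [← add_div, div_le_div_iff_of_pos_right (by positivity)]
  linarith

lemma gaussianReal_le_exp_mul_gaussianReal {v : NNReal} (hv : v ≠ 0) {a m : ℝ} (ham : a ≤ m)
    {s : Set ℝ} (hsa : s ⊆ Set.Iic a) :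
    gaussianReal m v s ≤
      ENNReal.ofReal (Real.exp (-(m - a) ^ 2 / (2 * (v : ℝ)))) * gaussianReal a v s := by
  rw [gaussianReal_apply m hv, gaussianReal_apply a hv,
    ← lintegral_const_mul _ (measurable_gaussianPDF a v)]
  refine setLIntegral_mono ((measurable_gaussianPDF a v).const_mul _) fun x hx => ?_
  rw [gaussianPDF, gaussianPDF, ← ENNReal.ofReal_mul (Real.exp_pos _).le]
  exact ENNReal.ofReal_le_ofReal
    (gaussianPDFReal_le_exp_mul_gaussianPDFReal v ham (hsa hx))

end ProbabilityTheory

/-- Band sensitivity: for one-dimensional Gaussians with common variance `v = σ²`,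
mean `1` versus mean `m > 1`, the gap of the masses of `[-1,1]` is at least
`P_{N(1,σ²)}[-1 ≤ t ≤ 1] · (1 - exp(-(m-1)²/(2σ²)))`. -/
theorem stmt11 (v : NNReal) (hv : 0 < v) (m : ℝ) (hm : 1 < m) :
    ((gaussianReal 1 v) (Set.Icc (-1) 1)).toReal -
        ((gaussianReal m v) (Set.Icc (-1) 1)).toReal ≥
      ((gaussianReal 1 v) (Set.Icc (-1) 1)).toReal *
        (1 - Real.exp (-(m - 1) ^ 2 / (2 * (v : ℝ)))) := by
  have hshift : ((gaussianReal m v) (Set.Icc (-1) 1)).toReal ≤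
      Real.exp (-(m - 1) ^ 2 / (2 * (v : ℝ))) * ((gaussianReal 1 v) (Set.Icc (-1) 1)).toReal := by
    rw [← ENNReal.toReal_ofReal (Real.exp_pos _).le, ← ENNReal.toReal_mul]
    exact ENNReal.toReal_mono (by finiteness)
      (gaussianReal_le_exp_mul_gaussianReal hv.ne' hm.le fun _ hx => hx.2)
  linarith
end

section
/- Let N(μ₁,Σ₁) and N(μ₂,Σ₂) be d-dimensional Gaussians with Σ₁ positive definite. Then TV(N(μ₁,Σ₁), N(μ₂,Σ₂)) ≤ (1/2)‖Σ₁^{−1/2}(μ₁−μ₂)‖₂ + √2 · ‖I − Σ₁^{−1/2} Σ₂ Σ₁^{−1/2}‖_F. -/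
/-!
Pass through `N(μ₂, Σ₁)` and use the triangle inequality. Each leg is controlled by the
Bhattacharyya coefficient `BC = ∫ √(p q)`: by Cauchy–Schwarz,
`∫ |p - q| = ∫ |√p - √q| (√p + √q) ≤ 2 √(1 - BC²)`.
For equal covariances `BC = exp (-s / 8)` with `s = ‖Σ₁^{-1/2} (μ₁ - μ₂)‖²`, and
`1 - exp (-s / 4) ≤ s / 4`. For equal means `BC² = 2^d √(det M) / det (1 + M)` with
`M = Σ₁^{-1/2} Σ₂ Σ₁^{-1/2}`; in the eigenvalues `λᵢ` of `M` this is `∏ 2 √λᵢ / (1 + λᵢ)`, and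
`1 - ∏ tᵢ ≤ ∑ (1 - tᵢ)` together with `1 - 2 √λ / (1 + λ) ≤ (1 - λ)²` bounds `1 - BC²` by
`‖1 - M‖_F²`.
-/

open MeasureTheory Real Matrix Unitary

section GaussianIntegral

variable {ι : Type*} [Fintype ι]

lemma exp_neg_dotProduct_self_div_two (x : ι → ℝ) :
    exp (-(x ⬝ᵥ x) / 2) = ∏ i, exp (-(1 / 2) * x i ^ 2) := by
  rw [← exp_sum, dotProduct, ← Finset.sum_neg_distrib, Finset.sum_div]
  exact congrArg exp (Finset.sum_congr rfl fun i _ => by ring)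

lemma integrable_exp_neg_dotProduct_self_div_two :
    Integrable fun x : ι → ℝ => exp (-(x ⬝ᵥ x) / 2) := by
  simp_rw [exp_neg_dotProduct_self_div_two]
  exact Integrable.fintype_prod fun _ => integrable_exp_neg_mul_sq (by norm_num)

lemma integral_exp_neg_dotProduct_self_div_two :
    ∫ x : ι → ℝ, exp (-(x ⬝ᵥ x) / 2) = √((2 * π) ^ Fintype.card ι) := by
  simp_rw [exp_neg_dotProduct_self_div_two]
  rw [volume_pi, integral_fintype_prod_eq_pow (fun t : ℝ => exp (-(1 / 2) * t ^ 2)),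
    integral_gaussian, div_div_eq_mul_div, div_one, mul_comm π 2, eq_comm,
    sqrt_eq_iff_eq_sq (by positivity) (by positivity), ← pow_mul, mul_comm (Fintype.card ι),
    pow_mul, sq_sqrt (by positivity)]

lemma dotProduct_mulVec_sub_add (P : Matrix ι ι ℝ) (x m₁ m₂ : ι → ℝ) :
    (x - m₁) ⬝ᵥ P *ᵥ (x - m₁) + (x - m₂) ⬝ᵥ P *ᵥ (x - m₂) =
      2 * ((x - (2⁻¹ : ℝ) • (m₁ + m₂)) ⬝ᵥ P *ᵥ (x - (2⁻¹ : ℝ) • (m₁ + m₂))) +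
        (m₁ - m₂) ⬝ᵥ P *ᵥ (m₁ - m₂) / 2 := by
  set y := x - (2⁻¹ : ℝ) • (m₁ + m₂)
  set h := (2⁻¹ : ℝ) • (m₁ - m₂)
  have h₁ : x - m₁ = y - h := by simp only [y, h]; module
  have h₂ : x - m₂ = y + h := by simp only [y, h]; module
  have hδ : m₁ - m₂ = (2 : ℝ) • h := by simp only [h]; module
  rw [h₁, h₂, hδ]
  simp only [mulVec_add, mulVec_sub, mulVec_smul, add_dotProduct, sub_dotProduct, smul_dotProduct,
    dotProduct_add, dotProduct_sub, dotProduct_smul, smul_eq_mul]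
  ring

lemma sqrt_mul_exp_mul_mul_exp {a b : ℝ} (s t : ℝ) :
    √(a * exp s * (b * exp t)) = √(a * b) * exp ((s + t) / 2) := by
  rw [mul_mul_mul_comm, ← exp_add, sqrt_mul' _ (exp_pos _).le, ← exp_half]

variable [DecidableEq ι]

lemma integral_exp_neg_dotProduct_transpose_mul_self {B : Matrix ι ι ℝ} (hB : B.det ≠ 0) :
    (∫ x : ι → ℝ, exp (-(x ⬝ᵥ (Bᵀ * B) *ᵥ x) / 2)) = √((2 * π) ^ Fintype.card ι) / |B.det|
      ∧ Integrable fun x : ι → ℝ => exp (-(x ⬝ᵥ (Bᵀ * B) *ᵥ x) / 2) := by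
  have hquad (x : ι → ℝ) : x ⬝ᵥ (Bᵀ * B) *ᵥ x = toLin' B x ⬝ᵥ toLin' B x := by
    rw [toLin'_apply, ← mulVec_mulVec, dotProduct_mulVec, vecMul_transpose]
  simp_rw [hquad]
  have hB_cont : Continuous (toLin' B) := LinearMap.continuous_of_finiteDimensional _
  have hf : AEStronglyMeasurable (fun y : ι → ℝ => exp (-(y ⬝ᵥ y) / 2))
      (Measure.map (toLin' B) volume) := by
    refine Continuous.aestronglyMeasurable ?_
    simp only [dotProduct]
    fun_prop
  have hmap := Real.map_matrix_volume_pi_eq_smul_volume_pi hB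
  constructor
  · rw [← integral_map hB_cont.aemeasurable hf, hmap, integral_smul_measure,
      integral_exp_neg_dotProduct_self_div_two, ENNReal.toReal_ofReal (abs_nonneg _), abs_inv,
      smul_eq_mul, inv_mul_eq_div]
  · exact (integrable_map_measure hf hB_cont.aemeasurable).mp
      (hmap ▸ integrable_exp_neg_dotProduct_self_div_two.smul_measure ENNReal.ofReal_ne_top)

end GaussianIntegral

section Bhattacharyya

variable {α : Type*} [MeasurableSpace α] {μ : Measure α}

lemma integral_abs_sq_sub_sq_le {u v : α → ℝ} (hu0 : 0 ≤ u) (hv0 : 0 ≤ v)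
    (hu : MemLp u 2 μ) (hv : MemLp v 2 μ) :
    ∫ x, |u x ^ 2 - v x ^ 2| ∂μ ≤
      √(∫ x, (u x - v x) ^ 2 ∂μ) * √(∫ x, (u x + v x) ^ 2 ∂μ) := by
  have hconj : HolderConjugate 2 2 := holderConjugate_iff.mpr ⟨by norm_num, by norm_num⟩
  have two : ENNReal.ofReal 2 = 2 := by norm_num
  have h := integral_mul_le_Lp_mul_Lq_of_nonneg hconj
    (Filter.Eventually.of_forall fun x => abs_nonneg (u x - v x))
    (Filter.Eventually.of_forall fun x => add_nonneg (hu0 x) (hv0 x))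
    (two ▸ (hu.sub hv).abs) (two ▸ hu.add hv)
  simp only [sq_abs, rpow_two, ← sqrt_eq_rpow] at h
  refine le_of_eq_of_le (integral_congr_ae (Filter.Eventually.of_forall fun x => ?_)) h
  dsimp only
  rw [sq_sub_sq, abs_mul, abs_of_nonneg (add_nonneg (hu0 x) (hv0 x)), mul_comm]

noncomputable def bhattacharyyaCoeff (μ : Measure α) (p q : α → ℝ) : ℝ := ∫ x, √(p x * q x) ∂μ

lemma memLp_two_sqrt {p : α → ℝ} (hp0 : 0 ≤ p) (hp : Integrable p μ) :
    MemLp (fun x => √(p x)) 2 μ :=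
  (memLp_two_iff_integrable_sq (continuous_sqrt.comp_aestronglyMeasurable
    hp.aestronglyMeasurable)).mpr (hp.congr (Filter.Eventually.of_forall fun x =>
      (sq_sqrt (hp0 x)).symm))

theorem integral_abs_sub_le_two_mul_sqrt_one_sub_bhattacharyyaCoeff_sq {p q : α → ℝ}
    (hp0 : 0 ≤ p) (hq0 : 0 ≤ q) (hp : Integrable p μ) (hq : Integrable q μ)
    (hp1 : ∫ x, p x ∂μ = 1) (hq1 : ∫ x, q x ∂μ = 1) :
    ∫ x, |p x - q x| ∂μ ≤ 2 * √(1 - bhattacharyyaCoeff μ p q ^ 2) := by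
  set u : α → ℝ := fun x => √(p x)
  set v : α → ℝ := fun x => √(q x)
  have hu := memLp_two_sqrt hp0 hp
  have hv := memLp_two_sqrt hq0 hq
  have huv : Integrable (fun x => u x * v x) μ := hu.integrable_mul hv
  have hu2 (x : α) : u x ^ 2 = p x := sq_sqrt (hp0 x)
  have hv2 (x : α) : v x ^ 2 = q x := sq_sqrt (hq0 x)
  set ρ := bhattacharyyaCoeff μ p q
  have hρ : ∫ x, u x * v x ∂μ = ρ :=
    integral_congr_ae (Filter.Eventually.of_forall fun x => (sqrt_mul (hp0 x) _).symm)
  have hpq : Integrable (fun x => p x + q x) μ := hp.add hq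
  have h2uv : Integrable (fun x => 2 * (u x * v x)) μ := huv.const_mul 2
  have hminus : ∫ x, (u x - v x) ^ 2 ∂μ = 2 - 2 * ρ := by
    have (x : α) : (u x - v x) ^ 2 = (p x + q x) - 2 * (u x * v x) := by
      rw [← hu2, ← hv2]; ring
    simp_rw [this]
    rw [integral_sub hpq h2uv, integral_add hp hq, integral_const_mul, hp1, hq1, hρ]
    norm_num
  have hplus : ∫ x, (u x + v x) ^ 2 ∂μ = 2 + 2 * ρ := by
    have (x : α) : (u x + v x) ^ 2 = (p x + q x) + 2 * (u x * v x) := by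
      rw [← hu2, ← hv2]; ring
    simp_rw [this]
    rw [integral_add hpq h2uv, integral_add hp hq, integral_const_mul, hp1, hq1, hρ]
    norm_num
  have hρ1 : 0 ≤ 2 - 2 * ρ := hminus ▸ integral_nonneg fun x => sq_nonneg _
  calc ∫ x, |p x - q x| ∂μ = ∫ x, |u x ^ 2 - v x ^ 2| ∂μ := by simp only [hu2, hv2]
    _ ≤ √(2 - 2 * ρ) * √(2 + 2 * ρ) := by
      rw [← hminus, ← hplus]
      exact integral_abs_sq_sub_sq_le (fun x => sqrt_nonneg _) (fun x => sqrt_nonneg _) hu hv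
    _ = 2 * √(1 - ρ ^ 2) := by
      rw [← sqrt_mul hρ1, show (2 - 2 * ρ) * (2 + 2 * ρ) = 2 ^ 2 * (1 - ρ ^ 2) by ring,
        sqrt_mul (by positivity), sqrt_sq zero_le_two]

lemma integral_abs_sub_le_add {f g h : α → ℝ} (hf : Integrable f μ) (hg : Integrable g μ)
    (hh : Integrable h μ) :
    ∫ x, |f x - h x| ∂μ ≤ ∫ x, |f x - g x| ∂μ + ∫ x, |g x - h x| ∂μ := by
  have hfg : Integrable (fun x => |f x - g x|) μ := (hf.sub hg).abs
  have hgh : Integrable (fun x => |g x - h x|) μ := (hg.sub hh).abs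
  rw [← integral_add hfg hgh]
  exact integral_mono (hf.sub hh).abs (hfg.add hgh) fun x => abs_sub_le _ _ _

end Bhattacharyya

lemma one_sub_prod_le_sum_one_sub {ι : Type*} {s : Finset ι} {t : ι → ℝ} (h0 : ∀ i ∈ s, 0 ≤ t i)
    (h1 : ∀ i ∈ s, t i ≤ 1) : 1 - ∏ i ∈ s, t i ≤ ∑ i ∈ s, (1 - t i) := by
  classical
  induction s using Finset.induction_on with
  | empty => simp
  | insert a s ha ih =>
    rw [Finset.prod_insert ha, Finset.sum_insert ha]
    have hs0 : 0 ≤ ∏ i ∈ s, t i := Finset.prod_nonneg fun i hi => h0 i (by simp [hi])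
    have hs1 : ∏ i ∈ s, t i ≤ 1 :=
      Finset.prod_le_one (fun i hi => h0 i (by simp [hi])) fun i hi => h1 i (by simp [hi])
    have ih' := ih (fun i hi => h0 i (by simp [hi])) fun i hi => h1 i (by simp [hi])
    nlinarith [h0 a (by simp), h1 a (by simp)]

lemma two_mul_sqrt_div_one_add_le_one {l : ℝ} (hl : 0 ≤ l) : 2 * √l / (1 + l) ≤ 1 := by
  rw [div_le_one (by positivity)]
  nlinarith [sq_nonneg (√l - 1), sq_sqrt hl]

lemma one_sub_two_mul_sqrt_div_one_add_le_sq {l : ℝ} (hl : 0 ≤ l) :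
    1 - 2 * √l / (1 + l) ≤ (1 - l) ^ 2 := by
  obtain ⟨r, hr, rfl⟩ : ∃ r, 0 ≤ r ∧ l = r ^ 2 := ⟨√l, sqrt_nonneg l, (sq_sqrt hl).symm⟩
  rw [sqrt_sq hr]
  calc 1 - 2 * r / (1 + r ^ 2) = (1 - r) ^ 2 / (1 + r ^ 2) := by field_simp; ring
    _ ≤ (1 - r) ^ 2 := div_le_self (sq_nonneg _) (by nlinarith)
    _ ≤ (1 - r) ^ 2 * (1 + r) ^ 2 := le_mul_of_one_le_right (sq_nonneg _) (by nlinarith)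
    _ = (1 - r ^ 2) ^ 2 := by ring

section Eigenvalues

variable {ι : Type*} [Fintype ι] [DecidableEq ι] {M : Matrix ι ι ℝ}

lemma Matrix.IsHermitian.det_one_add (hM : M.IsHermitian) :
    (1 + M).det = ∏ i, (1 + hM.eigenvalues i) := by
  conv_lhs => rw [hM.spectral_theorem]
  rw [← map_one (conjStarAlgAut ℝ _ hM.eigenvectorUnitary), ← map_add, det_map, ← diagonal_one,
    diagonal_add, det_diagonal]
  rfl

lemma Matrix.IsHermitian.sum_sq_one_sub_apply (hM : M.IsHermitian) :
    ∑ i, ∑ j, (1 - M) i j ^ 2 = ∑ i, (1 - hM.eigenvalues i) ^ 2 := by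
  set U := hM.eigenvectorUnitary
  set D : Matrix ι ι ℝ := diagonal fun i => 1 - hM.eigenvalues i
  have hN : 1 - M = conjStarAlgAut ℝ _ U D := by
    conv_lhs => rw [hM.spectral_theorem]
    rw [← map_one (conjStarAlgAut ℝ _ U), ← map_sub, ← diagonal_one, diagonal_sub]
    rfl
  calc ∑ i, ∑ j, (1 - M) i j ^ 2 = ((1 - M) * (1 - M)ᴴ).trace := by
        simp only [trace, diag, mul_apply, conjTranspose_apply, star_trivial, sq]
    _ = (D * Dᴴ).trace := by
        rw [← star_eq_conjTranspose, ← star_eq_conjTranspose, hN, ← map_star, ← map_mul,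
          conjStarAlgAut_apply, trace_mul_cycle, ← mul_assoc, coe_star_mul_self, one_mul]
    _ = ∑ i, (1 - hM.eigenvalues i) ^ 2 := by
        simp [D, trace, sq]

lemma Matrix.PosDef.one_sub_two_pow_mul_sqrt_det_div_det_one_add_le (hM : M.PosDef) :
    1 - 2 ^ Fintype.card ι * √M.det / (1 + M).det ≤ ∑ i, ∑ j, (1 - M) i j ^ 2 := by
  set l := hM.isHermitian.eigenvalues
  have hl (i : ι) : 0 ≤ l i := (hM.eigenvalues_pos i).le
  have hdet : 2 ^ Fintype.card ι * √M.det / (1 + M).det = ∏ i, 2 * √(l i) / (1 + l i) := by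
    rw [hM.isHermitian.det_one_add, hM.isHermitian.det_eq_prod_eigenvalues,
      Finset.prod_div_distrib, Finset.prod_mul_distrib, Finset.prod_const, Finset.card_univ]
    simp only [RCLike.ofReal_real_eq_id, id_eq]
    rw [sqrt_prod _ fun i _ => hl i]
  calc 1 - 2 ^ Fintype.card ι * √M.det / (1 + M).det
      = 1 - ∏ i, 2 * √(l i) / (1 + l i) := by rw [hdet]
    _ ≤ ∑ i, (1 - 2 * √(l i) / (1 + l i)) :=
        one_sub_prod_le_sum_one_sub (fun i _ => div_nonneg (by positivity) (by linarith [hl i]))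
          fun i _ => two_mul_sqrt_div_one_add_le_one (hl i)
    _ ≤ ∑ i, (1 - l i) ^ 2 :=
        Finset.sum_le_sum fun i _ => one_sub_two_mul_sqrt_div_one_add_le_sq (hl i)
    _ = ∑ i, ∑ j, (1 - M) i j ^ 2 := hM.isHermitian.sum_sq_one_sub_apply.symm

end Eigenvalues

section Whitening

variable {ι : Type*} [Fintype ι] [DecidableEq ι] {A S₁ S₂ : Matrix ι ι ℝ}

lemma Matrix.PosDef.mul_mul_same {S : Matrix ι ι ℝ} (hS : S.PosDef) (hA : A.PosDef) :
    (A * S * A).PosDef := by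
  simpa only [hA.isHermitian.eq] using
    hS.conjTranspose_mul_mul_same (mulVec_injective_of_isUnit hA.isUnit)

lemma sqrt_det_mul_det_mul_det_inv_add_inv (hdA : 0 < A.det) (hAsq : A * A = S₁⁻¹)
    (hS₂ : S₂.PosDef) :
    √(S₁.det * S₂.det) * (S₁⁻¹ + S₂⁻¹).det = (1 + A * S₂ * A).det / √(A * S₂ * A).det := by
  have hd₂ := hS₂.det_pos
  have hdet₁ : S₁.det = (A.det ^ 2)⁻¹ := by
    rw [sq, ← det_mul, hAsq, det_nonsing_inv, Ring.inverse_eq_inv', inv_inv]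
  -- `S₂ * (S₁⁻¹ + S₂⁻¹) = 1 + (S₂ * A) * A`, and `det (1 + X * Y) = det (1 + Y * X)`
  have hsum : S₂.det * (S₁⁻¹ + S₂⁻¹).det = (1 + A * S₂ * A).det := by
    rw [← det_mul, mul_add, mul_nonsing_inv _ (isUnit_iff_ne_zero.mpr hd₂.ne'), ← hAsq,
      ← mul_assoc, add_comm, det_one_add_mul_comm, ← mul_assoc]
  have hdetM : √(A * S₂ * A).det = A.det * √S₂.det := by
    rw [det_mul, det_mul, mul_right_comm, ← sq, sqrt_mul (sq_nonneg _), sqrt_sq hdA.le]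
  rw [hdetM, ← hsum, hdet₁, sqrt_mul (by positivity), sqrt_inv, sqrt_sq hdA.le]
  field_simp
  rw [sq_sqrt hd₂.le, mul_comm]

end Whitening

section GaussianDensity

variable {ι : Type*} [Fintype ι] [DecidableEq ι]

open scoped MatrixOrder in
lemma Matrix.PosDef.exists_transpose_mul_self {P : Matrix ι ι ℝ} (hP : P.PosDef) :
    ∃ B : Matrix ι ι ℝ, Bᵀ * B = P ∧ |B.det| = √P.det := by
  have hB := CFC.sqrt_nonneg P
  have hBB : CFC.sqrt P * CFC.sqrt P = P := CFC.sqrt_mul_sqrt_self P hP.posSemidef.nonneg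
  refine ⟨CFC.sqrt P, ?_, ?_⟩
  · rwa [← conjTranspose_eq_transpose_of_trivial, hB.posSemidef.isHermitian.eq]
  · conv_rhs => rw [← hBB, det_mul, sqrt_mul_self_eq_abs]

lemma Matrix.PosDef.integral_exp_neg_dotProduct_mulVec {P : Matrix ι ι ℝ} (hP : P.PosDef)
    (m : ι → ℝ) :
    ∫ x : ι → ℝ, exp (-((x - m) ⬝ᵥ P *ᵥ (x - m)) / 2) = √((2 * π) ^ Fintype.card ι / P.det) := by
  obtain ⟨B, rfl, hB⟩ := hP.exists_transpose_mul_self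
  have hdet : B.det ≠ 0 := by
    rw [← abs_pos, hB]; exact sqrt_pos.mpr (by simpa [hB] using hP.det_pos)
  rw [integral_sub_right_eq_self (fun x => exp (-(x ⬝ᵥ (Bᵀ * B) *ᵥ x) / 2)) m,
    (integral_exp_neg_dotProduct_transpose_mul_self hdet).1, hB, sqrt_div' _ hP.det_pos.le]

lemma Matrix.PosDef.integrable_exp_neg_dotProduct_mulVec {P : Matrix ι ι ℝ} (hP : P.PosDef)
    (m : ι → ℝ) :
    Integrable fun x : ι → ℝ => exp (-((x - m) ⬝ᵥ P *ᵥ (x - m)) / 2) := by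
  obtain ⟨B, rfl, hB⟩ := hP.exists_transpose_mul_self
  have hdet : B.det ≠ 0 := by
    rw [← abs_pos, hB]; exact sqrt_pos.mpr (by simpa [hB] using hP.det_pos)
  simpa [sub_eq_add_neg] using
    (integral_exp_neg_dotProduct_transpose_mul_self hdet).2.comp_add_right (-m)

lemma Matrix.PosDef.integral_exp_neg_dotProduct_inv_mulVec {S : Matrix ι ι ℝ} (hS : S.PosDef)
    (m : ι → ℝ) :
    ∫ x : ι → ℝ, exp (-((x - m) ⬝ᵥ S⁻¹ *ᵥ (x - m)) / 2) = √((2 * π) ^ Fintype.card ι * S.det) := by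
  rw [hS.inv.integral_exp_neg_dotProduct_mulVec, det_nonsing_inv, Ring.inverse_eq_inv',
    div_inv_eq_mul]

noncomputable def gaussianDensity (m : ι → ℝ) (S : Matrix ι ι ℝ) (x : ι → ℝ) : ℝ :=
  (√((2 * π) ^ Fintype.card ι * S.det))⁻¹ * exp (-((x - m) ⬝ᵥ S⁻¹ *ᵥ (x - m)) / 2)

variable {S S₁ S₂ : Matrix ι ι ℝ}

lemma gaussianDensity_nonneg (m : ι → ℝ) (S : Matrix ι ι ℝ) : 0 ≤ gaussianDensity m S :=
  fun x => by unfold gaussianDensity; positivity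

lemma integrable_gaussianDensity (hS : S.PosDef) (m : ι → ℝ) :
    Integrable (gaussianDensity m S) :=
  (hS.inv.integrable_exp_neg_dotProduct_mulVec m).const_mul _

lemma integral_gaussianDensity (hS : S.PosDef) (m : ι → ℝ) :
    ∫ x, gaussianDensity m S x = 1 := by
  have hpos : 0 < (2 * π) ^ Fintype.card ι * S.det := by have := hS.det_pos; positivity
  simp only [gaussianDensity]
  rw [integral_const_mul, hS.integral_exp_neg_dotProduct_inv_mulVec,
    inv_mul_cancel₀ (sqrt_pos.mpr hpos).ne']

lemma bhattacharyyaCoeff_gaussianDensity_of_cov_eq (hS : S.PosDef) (m₁ m₂ : ι → ℝ) :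
    bhattacharyyaCoeff volume (gaussianDensity m₁ S) (gaussianDensity m₂ S) =
      exp (-((m₁ - m₂) ⬝ᵥ S⁻¹ *ᵥ (m₁ - m₂)) / 8) := by
  set a := √((2 * π) ^ Fintype.card ι * S.det)
  have ha : 0 < a := sqrt_pos.mpr (by have := hS.det_pos; positivity)
  have hpt (x : ι → ℝ) : √(gaussianDensity m₁ S x * gaussianDensity m₂ S x) =
      a⁻¹ * exp (-((m₁ - m₂) ⬝ᵥ S⁻¹ *ᵥ (m₁ - m₂)) / 8) *
        exp (-((x - (2⁻¹ : ℝ) • (m₁ + m₂)) ⬝ᵥ S⁻¹ *ᵥ (x - (2⁻¹ : ℝ) • (m₁ + m₂))) / 2) := by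
    rw [gaussianDensity, gaussianDensity, sqrt_mul_exp_mul_mul_exp,
      sqrt_mul_self (inv_nonneg.mpr ha.le), mul_assoc, ← exp_add]
    congr 2
    linarith [dotProduct_mulVec_sub_add S⁻¹ x m₁ m₂]
  simp only [bhattacharyyaCoeff, hpt]
  rw [integral_const_mul, hS.integral_exp_neg_dotProduct_inv_mulVec, mul_comm, ← mul_assoc,
    mul_inv_cancel₀ ha.ne', one_mul]

lemma bhattacharyyaCoeff_gaussianDensity_sq_of_mean_eq (hS₁ : S₁.PosDef) (hS₂ : S₂.PosDef)
    (m : ι → ℝ) :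
    bhattacharyyaCoeff volume (gaussianDensity m S₁) (gaussianDensity m S₂) ^ 2 =
      2 ^ Fintype.card ι / (√(S₁.det * S₂.det) * (S₁⁻¹ + S₂⁻¹).det) := by
  set c := (2 * π) ^ Fintype.card ι
  have hc : 0 < c := by positivity
  have hd₁ := hS₁.det_pos
  have hd₂ := hS₂.det_pos
  set Q : Matrix ι ι ℝ := (2⁻¹ : ℝ) • (S₁⁻¹ + S₂⁻¹)
  have hQ : Q.PosDef := (hS₁.inv.add hS₂.inv).smul (by norm_num)
  have hpt (x : ι → ℝ) : √(gaussianDensity m S₁ x * gaussianDensity m S₂ x) =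
      √((√(c * S₁.det))⁻¹ * (√(c * S₂.det))⁻¹) * exp (-((x - m) ⬝ᵥ Q *ᵥ (x - m)) / 2) := by
    rw [gaussianDensity, gaussianDensity, sqrt_mul_exp_mul_mul_exp]
    congr 2
    simp only [Q, smul_mulVec, add_mulVec, dotProduct_smul, dotProduct_add, smul_eq_mul]
    ring
  simp only [bhattacharyyaCoeff, hpt]
  rw [integral_const_mul, hQ.integral_exp_neg_dotProduct_mulVec, mul_pow, sq_sqrt (by positivity),
    sq_sqrt (div_nonneg hc.le hQ.det_pos.le), det_smul, inv_pow, ← inv_mul_eq_div]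
  have hP := (hS₁.inv.add hS₂.inv).det_pos
  rw [sqrt_mul hc.le, sqrt_mul hc.le, sqrt_mul hd₁.le]
  field_simp
  exact (sq_sqrt hc.le).symm

lemma integral_abs_gaussianDensity_sub_le (hS₁ : S₁.PosDef) (hS₂ : S₂.PosDef) (m₁ m₂ : ι → ℝ) :
    ∫ x, |gaussianDensity m₁ S₁ x - gaussianDensity m₂ S₂ x| ≤
      2 * √(1 - bhattacharyyaCoeff volume (gaussianDensity m₁ S₁) (gaussianDensity m₂ S₂) ^ 2) :=
  integral_abs_sub_le_two_mul_sqrt_one_sub_bhattacharyyaCoeff_sq (gaussianDensity_nonneg m₁ S₁)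
    (gaussianDensity_nonneg m₂ S₂) (integrable_gaussianDensity hS₁ m₁)
    (integrable_gaussianDensity hS₂ m₂) (integral_gaussianDensity hS₁ m₁)
    (integral_gaussianDensity hS₂ m₂)

lemma integral_abs_gaussianDensity_sub_of_cov_eq_le (hS : S.PosDef) (m₁ m₂ : ι → ℝ) :
    ∫ x, |gaussianDensity m₁ S x - gaussianDensity m₂ S x| ≤
      √((m₁ - m₂) ⬝ᵥ S⁻¹ *ᵥ (m₁ - m₂)) := by
  generalize hs_def : (m₁ - m₂) ⬝ᵥ S⁻¹ *ᵥ (m₁ - m₂) = s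
  have hs : 0 ≤ s := by
    simpa only [star_trivial, hs_def] using hS.inv.posSemidef.dotProduct_mulVec_nonneg (m₁ - m₂)
  refine (integral_abs_gaussianDensity_sub_le hS hS m₁ m₂).trans ?_
  calc 2 * √(1 - bhattacharyyaCoeff volume (gaussianDensity m₁ S) (gaussianDensity m₂ S) ^ 2)
      = 2 * √(1 - exp (-s / 4)) := by
        rw [bhattacharyyaCoeff_gaussianDensity_of_cov_eq hS, hs_def, ← exp_nat_mul]
        push_cast
        ring_nf
    _ ≤ 2 * √(s / 4) := by gcongr; linarith [add_one_le_exp (-s / 4)]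
    _ = √s := by
        rw [sqrt_div' _ (by norm_num : (0 : ℝ) ≤ 4), show (4 : ℝ) = 2 ^ 2 by norm_num,
          sqrt_sq zero_le_two]
        ring

lemma integral_abs_gaussianDensity_sub_of_mean_eq_le (hS₁ : S₁.PosDef) (hS₂ : S₂.PosDef)
    {A : Matrix ι ι ℝ} (hA : A.PosDef) (hAsq : A * A = S₁⁻¹) (m : ι → ℝ) :
    ∫ x, |gaussianDensity m S₁ x - gaussianDensity m S₂ x| ≤
      2 * √(∑ i, ∑ j, (1 - A * S₂ * A) i j ^ 2) := by
  refine (integral_abs_gaussianDensity_sub_le hS₁ hS₂ m m).trans ?_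
  rw [bhattacharyyaCoeff_gaussianDensity_sq_of_mean_eq hS₁ hS₂,
    sqrt_det_mul_det_mul_det_inv_add_inv hA.det_pos hAsq hS₂, div_div_eq_mul_div]
  gcongr
  exact (hS₂.mul_mul_same hA).one_sub_two_pow_mul_sqrt_det_div_det_one_add_le

end GaussianDensity

/-- TV distance upper bound between Gaussians `N(μ₁,S1)` and `N(μ₂,S2)` (expressed via their
densities): `TV ≤ (1/2)‖S1^{-1/2}(μ₁-μ₂)‖₂ + √2 ‖I - S1^{-1/2} S2 S1^{-1/2}‖_F`,
where `A = S1^{-1/2}` is the positive definite square root of `S1⁻¹`. -/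
theorem stmt16 (d : ℕ) (μ₁ μ₂ : Fin d → ℝ) (S1 S2 A : Matrix (Fin d) (Fin d) ℝ)
    (hS1 : S1.PosDef) (hS2 : S2.PosDef) (hA : A.PosDef) (hAsq : A * A = S1⁻¹) :
    (1 / 2) * ∫ x : Fin d → ℝ,
        |(Real.sqrt ((2 * Real.pi) ^ d * S1.det))⁻¹ *
            Real.exp (-(dotProduct (x - μ₁) (S1⁻¹.mulVec (x - μ₁))) / 2) -
          (Real.sqrt ((2 * Real.pi) ^ d * S2.det))⁻¹ *
            Real.exp (-(dotProduct (x - μ₂) (S2⁻¹.mulVec (x - μ₂))) / 2)| ≤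
      (1 / 2) * Real.sqrt (∑ i, (A.mulVec (μ₁ - μ₂) i) ^ 2) +
        Real.sqrt 2 * Real.sqrt (∑ i, ∑ j, ((1 - A * S2 * A) i j) ^ 2) := by
  suffices h : (1 / 2) * ∫ x, |gaussianDensity μ₁ S1 x - gaussianDensity μ₂ S2 x| ≤
      (1 / 2) * √(∑ i, (A *ᵥ (μ₁ - μ₂)) i ^ 2) +
        √2 * √(∑ i, ∑ j, (1 - A * S2 * A) i j ^ 2) by
    simpa only [gaussianDensity, Fintype.card_fin] using h
  have hs : (μ₁ - μ₂) ⬝ᵥ S1⁻¹ *ᵥ (μ₁ - μ₂) = ∑ i, (A *ᵥ (μ₁ - μ₂)) i ^ 2 := by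
    rw [← hAsq, ← mulVec_mulVec, dotProduct_mulVec, ← mulVec_transpose,
      ← conjTranspose_eq_transpose_of_trivial, hA.isHermitian.eq]
    simp only [dotProduct, sq]
  have hmean := integral_abs_gaussianDensity_sub_of_cov_eq_le hS1 μ₁ μ₂
  have hcov := integral_abs_gaussianDensity_sub_of_mean_eq_le hS1 hS2 hA hAsq μ₂
  have htri := integral_abs_sub_le_add (integrable_gaussianDensity hS1 μ₁)
    (integrable_gaussianDensity hS1 μ₂) (integrable_gaussianDensity hS2 μ₂)
  have hsqrt2 : 1 ≤ √2 := one_le_sqrt.mpr one_le_two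
  rw [hs] at hmean
  nlinarith [sqrt_nonneg (∑ i, ∑ j, (1 - A * S2 * A) i j ^ 2)]
end
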